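/- Let n ≥ 4 and let each odd vertex of the diamond D_n be independently closed with probability p. Let F_n be the event that each odd row of the top-right quadrant Q contains a closed vertex ⟨i,j⟩ with i ∉ {1, 2n−1}, and G_n the event that the rightmost column of Q contains a closed vertex. Then P(F_n ∩ G_n) ≥ 1 − (n+1)(1−p)^{n−2}. -/

import Mathlib

open MeasureTheory

/-- The top-right quadrant `Q` of the diamond `D_n`: vertices of `ℤ²` with
column index `i = u.1 + u.2 ∈ [1, 2n-1]` and row index
`j = u.2 - u.1 ∈ [0, 2n-1]`. -/
def quadrant (n : ℕ) : Set (ℤ × ℤ) :=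
  {u | 1 ≤ u.1 + u.2 ∧ u.1 + u.2 ≤ 2 * n - 1 ∧ 0 ≤ u.2 - u.1 ∧ u.2 - u.1 ≤ 2 * n - 1}

/-!
Each of the `n` odd rows of `Q` has `n - 2` odd vertices with column index in `[3, 2n-3]`,
and the rightmost column has (at least) `n - 2` odd vertices. If `F_n ∩ G_n` fails, all
vertices of one of these `n + 1` blocks of size `n - 2` are open, which by independence has
probability `(1-p)^(n-2)`; the union bound gives the estimate.
-/

open Finset ProbabilityTheory

section IndependentBits

variable {ι Ω : Type*} [MeasurableSpace Ω] {μ : Measure Ω} [IsProbabilityMeasure μ] {p : ℝ}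

lemma measure_eq_false_of_measure_eq_true {f : Ω → Bool} (hf : Measurable f) (hp : 0 ≤ p)
    (h : μ {ω | f ω = true} = ENNReal.ofReal p) :
    μ {ω | f ω = false} = ENNReal.ofReal (1 - p) := by
  have hcompl : {ω | f ω = false} = {ω | f ω = true}ᶜ := by ext; simp
  have htrue : MeasurableSet {ω | f ω = true} := hf (measurableSet_singleton true)
  rw [hcompl, prob_compl_eq_one_sub htrue, h,
    ENNReal.ofReal_sub _ hp, ENNReal.ofReal_one]

variable {C : ι → Ω → Bool}

lemma measure_forall_eq_false (hC : ∀ u, Measurable (C u)) (hindep : iIndepFun C μ)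
    (hp : 0 ≤ p) (s : Finset ι) (hs : ∀ u ∈ s, μ {ω | C u ω = true} = ENNReal.ofReal p) :
    μ {ω | ∀ u ∈ s, C u ω = false} = ENNReal.ofReal (1 - p) ^ #s := by
  have hinter : {ω | ∀ u ∈ s, C u ω = false} = ⋂ u ∈ s, {ω | C u ω = false} := by ext; simp
  rw [hinter, hindep.meas_biInter (s := fun u => {ω | C u ω = false})
      fun u _ => ⟨{false}, measurableSet_singleton false, rfl⟩,
    prod_congr rfl fun u hu => measure_eq_false_of_measure_eq_true (hC u) hp (hs u hu),
    prod_const]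

lemma measure_exists_forall_eq_false_le (hC : ∀ u, Measurable (C u))
    (hindep : iIndepFun C μ) (hp : 0 ≤ p) {κ : Type*} (K : Finset κ) (S : κ → Finset ι)
    {m : ℕ} (hcard : ∀ k ∈ K, #(S k) = m)
    (hs : ∀ k ∈ K, ∀ u ∈ S k, μ {ω | C u ω = true} = ENNReal.ofReal p) :
    μ {ω | ∃ k ∈ K, ∀ u ∈ S k, C u ω = false} ≤ #K * ENNReal.ofReal (1 - p) ^ m := by
  have hunion : {ω | ∃ k ∈ K, ∀ u ∈ S k, C u ω = false} =
      ⋃ k ∈ K, {ω | ∀ u ∈ S k, C u ω = false} := by ext; simp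
  calc μ {ω | ∃ k ∈ K, ∀ u ∈ S k, C u ω = false}
      ≤ ∑ k ∈ K, μ {ω | ∀ u ∈ S k, C u ω = false} := hunion ▸ measure_biUnion_finset_le K _
    _ = ∑ _k ∈ K, ENNReal.ofReal (1 - p) ^ m := sum_congr rfl fun k hk => by
        rw [measure_forall_eq_false hC hindep hp _ (hs k hk), hcard k hk]
    _ = #K * ENNReal.ofReal (1 - p) ^ m := by rw [sum_const, nsmul_eq_mul]

end IndependentBits

lemma ofReal_one_sub_le_of_measure_compl_le {Ω : Type*} [MeasurableSpace Ω] {μ : Measure Ω}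
    [IsProbabilityMeasure μ] {s : Set Ω} {x : ℝ} (hx : 0 ≤ x)
    (h : μ sᶜ ≤ ENNReal.ofReal x) : ENNReal.ofReal (1 - x) ≤ μ s := by
  have hcover : 1 ≤ μ s + μ sᶜ := by
    calc (1 : ENNReal) = μ (s ∪ sᶜ) := by rw [Set.union_compl_self, measure_univ]
      _ ≤ μ s + μ sᶜ := measure_union_le _ _
  calc ENNReal.ofReal (1 - x) = 1 - ENNReal.ofReal x := by
        rw [ENNReal.ofReal_sub _ hx, ENNReal.ofReal_one]
    _ ≤ 1 - μ sᶜ := tsub_le_tsub_left h 1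
    _ ≤ μ s := tsub_le_iff_right.mpr hcover

/-- In rotated coordinates, the odd vertices `⟨2k+1, 2m+1⟩`, `1 ≤ k ≤ n-2`, of row `2m+1`. -/
def innerRow (n m : ℕ) : Finset (ℤ × ℤ) :=
  (Icc 1 (n - 2)).image fun k : ℕ => ((k : ℤ) - m, (k : ℤ) + m + 1)

/-- In rotated coordinates, the odd vertices `⟨2n-1, 2m+1⟩`, `m < n-2`, of column `2n-1`. -/
def rightColumn (n : ℕ) : Finset (ℤ × ℤ) :=
  (range (n - 2)).image fun m : ℕ => ((n : ℤ) - 1 - m, (n : ℤ) + m)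

lemma card_innerRow (n m : ℕ) : #(innerRow n m) = n - 2 := by
  rw [innerRow, card_image_of_injective _ fun a b hab => by simpa using congrArg Prod.fst hab,
    Nat.card_Icc, Nat.add_sub_cancel]

lemma card_rightColumn (n : ℕ) : #(rightColumn n) = n - 2 := by
  rw [rightColumn, card_image_of_injective _ fun a b hab => by simpa using congrArg Prod.snd hab,
    card_range]

lemma odd_of_mem_innerRow {n m : ℕ} {u : ℤ × ℤ} (hu : u ∈ innerRow n m) : Odd (u.1 + u.2) := by
  obtain ⟨k, -, rfl⟩ := mem_image.mp hu
  exact ⟨k, by ring⟩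

lemma odd_of_mem_rightColumn {n : ℕ} {u : ℤ × ℤ} (hu : u ∈ rightColumn n) :
    Odd (u.1 + u.2) := by
  obtain ⟨m, -, rfl⟩ := mem_image.mp hu
  exact ⟨n - 1, by ring⟩

lemma mem_quadrant_of_mem_innerRow {n m : ℕ} (hm : m < n) {u : ℤ × ℤ}
    (hu : u ∈ innerRow n m) :
    u ∈ quadrant n ∧ u.2 - u.1 = 2 * m + 1 ∧ u.1 + u.2 ≠ 1 ∧ u.1 + u.2 ≠ 2 * n - 1 := by
  obtain ⟨k, hk, rfl⟩ := mem_image.mp hu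
  rw [mem_Icc] at hk
  simp only [quadrant, Set.mem_ofPred_eq]
  omega

lemma mem_quadrant_of_mem_rightColumn {n : ℕ} {u : ℤ × ℤ} (hu : u ∈ rightColumn n) :
    u ∈ quadrant n ∧ u.1 + u.2 = 2 * n - 1 := by
  obtain ⟨m, hm, rfl⟩ := mem_image.mp hu
  rw [mem_range] at hm
  simp only [quadrant, Set.mem_ofPred_eq]
  omega

section Events

variable {Ω : Type*} (n : ℕ) (C : ℤ × ℤ → Ω → Bool)

def oddRowsHaveInnerClosed : Set Ω :=
  {ω | ∀ j : ℤ, Odd j → 1 ≤ j → j ≤ 2 * n - 1 →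
    ∃ u ∈ quadrant n, u.2 - u.1 = j ∧ C u ω = true ∧ u.1 + u.2 ≠ 1 ∧ u.1 + u.2 ≠ 2 * n - 1}

def rightColumnHasClosed : Set Ω :=
  {ω | ∃ u ∈ quadrant n, u.1 + u.2 = 2 * n - 1 ∧ C u ω = true}

lemma compl_oddRowsHaveInnerClosed_subset :
    (oddRowsHaveInnerClosed n C)ᶜ ⊆ {ω | ∃ m ∈ range n, ∀ u ∈ innerRow n m, C u ω = false} := by
  intro ω hω
  simp only [oddRowsHaveInnerClosed, Set.mem_compl_iff, Set.mem_ofPred_eq, not_forall,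
    not_exists, not_and] at hω
  obtain ⟨j, ⟨m, rfl⟩, hj1, hjn, hopen⟩ := hω
  have hm : m.toNat < n := by omega
  refine ⟨m.toNat, mem_range.mpr hm, fun u hu => ?_⟩
  obtain ⟨hQ, hrow, hi1, hin⟩ := mem_quadrant_of_mem_innerRow hm hu
  have hopen_u := hopen u hQ (by omega)
  cases h : C u ω
  · rfl
  · exact absurd hin (hopen_u h hi1)

lemma compl_rightColumnHasClosed_subset :
    (rightColumnHasClosed n C)ᶜ ⊆ {ω | ∀ u ∈ rightColumn n, C u ω = false} := by
  intro ω hω u hu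
  simp only [rightColumnHasClosed, Set.mem_compl_iff, Set.mem_ofPred_eq, not_exists,
    not_and] at hω
  obtain ⟨hQ, hcol⟩ := mem_quadrant_of_mem_rightColumn hu
  simpa using hω u hQ hcol

end Events

theorem quadrant_events_prob_bound_general
    {Ω : Type*} [MeasurableSpace Ω] (μ : Measure Ω) [IsProbabilityMeasure μ]
    (n : ℕ) (p : ℝ) (hp0 : 0 ≤ p) (hp1 : p ≤ 1)
    (C : ℤ × ℤ → Ω → Bool) (hmeas : ∀ u, Measurable (C u))
    (hindep : ProbabilityTheory.iIndepFun C μ)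
    (hprob : ∀ u : ℤ × ℤ, Odd (u.1 + u.2) → μ {ω | C u ω = true} = ENNReal.ofReal p) :
    ENNReal.ofReal (1 - (n + 1 : ℝ) * (1 - p) ^ (n - 2)) ≤
      μ ({ω | ∀ j : ℤ, Odd j → 1 ≤ j → j ≤ 2 * n - 1 →
            ∃ u ∈ quadrant n, u.2 - u.1 = j ∧ C u ω = true ∧
              u.1 + u.2 ≠ 1 ∧ u.1 + u.2 ≠ 2 * n - 1}
          ∩ {ω | ∃ u ∈ quadrant n, u.1 + u.2 = 2 * n - 1 ∧ C u ω = true}) := by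
  change _ ≤ μ (oddRowsHaveInnerClosed n C ∩ rightColumnHasClosed n C)
  have hrows := measure_exists_forall_eq_false_le hmeas hindep hp0 (range n) (innerRow n)
    (fun m _ => card_innerRow n m) fun _ _ u hu => hprob u (odd_of_mem_innerRow hu)
  have hcol := measure_forall_eq_false hmeas hindep hp0 (rightColumn n)
    fun u hu => hprob u (odd_of_mem_rightColumn hu)
  rw [card_range] at hrows
  rw [card_rightColumn] at hcol
  refine ofReal_one_sub_le_of_measure_compl_le
    (mul_nonneg (by positivity) (pow_nonneg (by linarith) _)) ?_
  calc μ (oddRowsHaveInnerClosed n C ∩ rightColumnHasClosed n C)ᶜ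
      ≤ μ (oddRowsHaveInnerClosed n C)ᶜ + μ (rightColumnHasClosed n C)ᶜ := by
        rw [Set.compl_inter]; exact measure_union_le _ _
    _ ≤ n * ENNReal.ofReal (1 - p) ^ (n - 2) + ENNReal.ofReal (1 - p) ^ (n - 2) :=
        add_le_add ((measure_mono (compl_oddRowsHaveInnerClosed_subset n C)).trans hrows)
          ((measure_mono (compl_rightColumnHasClosed_subset n C)).trans_eq hcol)
    _ = ENNReal.ofReal ((n + 1 : ℝ) * (1 - p) ^ (n - 2)) := by
        rw [ENNReal.ofReal_mul (by positivity), ENNReal.ofReal_pow (by linarith),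
          ENNReal.ofReal_add (by positivity) zero_le_one, ENNReal.ofReal_natCast,
          ENNReal.ofReal_one]
        ring

/-- Let each odd vertex of the diamond `D_n` (`n ≥ 4`) be
independently closed with probability `p` (closedness indicators `C u`).  Let
`F_n` be the event that every odd row of the quadrant `Q` contains a closed
vertex whose column index is neither `1` nor `2n-1`, and `G_n` the event that
the rightmost column of `Q` contains a closed vertex.  Then
`P(F_n ∩ G_n) ≥ 1 - (n+1)(1-p)^(n-2)`. -/
theorem quadrant_events_prob_bound
    {Ω : Type*} [MeasurableSpace Ω] (μ : Measure Ω) [IsProbabilityMeasure μ]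
    (n : ℕ) (hn : 4 ≤ n) (p : ℝ) (hp0 : 0 ≤ p) (hp1 : p ≤ 1)
    (C : ℤ × ℤ → Ω → Bool) (hmeas : ∀ u, Measurable (C u))
    (hindep : ProbabilityTheory.iIndepFun C μ)
    (hprob : ∀ u : ℤ × ℤ, Odd (u.1 + u.2) → μ {ω | C u ω = true} = ENNReal.ofReal p) :
    ENNReal.ofReal (1 - (n + 1 : ℝ) * (1 - p) ^ (n - 2)) ≤
      μ ({ω | ∀ j : ℤ, Odd j → 1 ≤ j → j ≤ 2 * n - 1 →
            ∃ u ∈ quadrant n, u.2 - u.1 = j ∧ C u ω = true ∧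
              u.1 + u.2 ≠ 1 ∧ u.1 + u.2 ≠ 2 * n - 1}
          ∩ {ω | ∃ u ∈ quadrant n, u.1 + u.2 = 2 * n - 1 ∧ C u ω = true}) :=
  quadrant_events_prob_bound_general μ n p hp0 hp1 C hmeas hindep hprob
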